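/- arXiv:2506.11960 — 2 statements merged into one kernel-verified Lean document; each statement's English description precedes it below -/
import Mathlib

section
/- Identification of conditional average potential outcomes under unconfoundedness: under the CIA Y^d ⫫ D | X and overlap P(D = d | X) > 0 a.s., together with consistency Y·1{D=d} = Y^d·1{D=d}, one has E[Y^d | X] = E[Y | X, D = d] almost surely. -/
open MeasureTheory

/-- Identification of conditional average potential outcomes under
unconfoundedness: `E[Y^d | X] = E[Y | X, D = d]` almost surely, where
conditioning on `X` is represented by the sub-σ-algebra `m0 = σ(X)`. -/
theorem capo_identification {Ω 𝒟 : Type*} (m0 : MeasurableSpace Ω) {mΩ : MeasurableSpace Ω}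
    [MeasurableSpace 𝒟] [MeasurableSingletonClass 𝒟] [DecidableEq 𝒟]
    (μ : Measure Ω) [IsProbabilityMeasure μ]
    (hm0 : m0 ≤ mΩ)
    (D : Ω → 𝒟) (hD : Measurable D) (d : 𝒟)
    (Y Yd p mu0 : Ω → ℝ)
    (ind : Ω → ℝ) (hind : ind = fun ω => if D ω = d then (1 : ℝ) else 0)
    (hYdInt : Integrable Yd μ)
    (hYindInt : Integrable (fun ω => Y ω * ind ω) μ)
    (hmu0Int : Integrable mu0 μ)
    -- `p` is a version of `P(D = d | X)`
    (hp : p =ᵐ[μ] μ[ind | m0])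
    -- conditional independence: `Y^d ⫫ D | X`
    (hCIA : (μ[fun ω => Yd ω * ind ω | m0]) =ᵐ[μ] fun ω => (μ[Yd | m0]) ω * p ω)
    -- overlap
    (hoverlap : ∀ᵐ ω ∂μ, 0 < p ω)
    -- consistency (SUTVA)
    (hcons : ∀ ω, Y ω * ind ω = Yd ω * ind ω)
    -- `mu0` is a version of `E[Y | X, D = d]`
    (hmu0Meas : StronglyMeasurable[m0] mu0)
    (hmu0 : ∀ s, MeasurableSet[m0] s →
      ∫ ω in s, Y ω * ind ω ∂μ = ∫ ω in s, mu0 ω * ind ω ∂μ) :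
    (μ[Yd | m0]) =ᵐ[μ] mu0 := by
  have hindb : ∀ ω, ‖ind ω‖ ≤ 1 := by
    intro ω; rw [hind]; dsimp only; split <;> simp
  have hindMeas : Measurable[mΩ] ind := by
    rw [hind]
    exact Measurable.ite (hD (measurableSet_singleton d)) measurable_const measurable_const
  have hindInt : Integrable ind μ :=
    (integrable_const (1 : ℝ)).mono' hindMeas.aestronglyMeasurable
      (Filter.Eventually.of_forall hindb)
  -- integrability of mu0 * ind
  have hmu0ind : Integrable (mu0 * ind) μ := by
    refine hmu0Int.norm.mono' ((hmu0Meas.mono hm0).aestronglyMeasurable.mul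
      hindInt.aestronglyMeasurable) (Filter.Eventually.of_forall fun ω => ?_)
    calc ‖(mu0 * ind) ω‖ = ‖mu0 ω‖ * ‖ind ω‖ := norm_mul _ _
      _ ≤ ‖mu0 ω‖ * 1 := mul_le_mul_of_nonneg_left (hindb ω) (norm_nonneg _)
      _ = ‖mu0 ω‖ := mul_one _
  -- pull-out: μ[mu0 * ind | m0] = mu0 * μ[ind | m0]
  have hpull : μ[mu0 * ind | m0] =ᵐ[μ] mu0 * μ[ind | m0] :=
    condExp_mul_of_stronglyMeasurable_left hmu0Meas hmu0ind hindInt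
  -- Yd * ind integrable
  have hYdind : Integrable (fun ω => Yd ω * ind ω) μ := by
    have h : (fun ω => Y ω * ind ω) = fun ω => Yd ω * ind ω := funext hcons
    rwa [h] at hYindInt
  -- μ[mu0 * ind | m0] = μ[Yd * ind | m0]
  have hcond_eq : μ[mu0 * ind | m0] =ᵐ[μ] μ[fun ω => Yd ω * ind ω | m0] := by
    haveI : SigmaFinite (μ.trim hm0) := by
      have : IsFiniteMeasure (μ.trim hm0) := isFiniteMeasure_trim hm0
      infer_instance
    refine ae_eq_condExp_of_forall_setIntegral_eq (m := m0) (m₀ := mΩ) (μ := μ) hm0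
      (f := fun ω => Yd ω * ind ω) (g := μ[mu0 * ind | m0]) hYdind
      ?_ ?_ ?_
    · exact fun s _ _ => Integrable.integrableOn (μ := μ) (s := s)
        (integrable_condExp (m := m0) (m₀ := mΩ) (μ := μ))
    · intro s hs hμs
      rw [setIntegral_condExp (m₀ := mΩ) hm0 hmu0ind hs]
      have h1 := (hmu0 s hs).symm
      simp only [← hcons]
      exact h1.trans (by rfl)
    · exact (stronglyMeasurable_condExp (m := m0) (m₀ := mΩ) (μ := μ)).aestronglyMeasurable
  -- combine
  have key : (fun ω => (μ[Yd | m0]) ω * p ω) =ᵐ[μ] fun ω => mu0 ω * p ω := by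
    have h1 : μ[fun ω => Yd ω * ind ω | m0] =ᵐ[μ] mu0 * μ[ind | m0] :=
      hcond_eq.symm.trans hpull
    filter_upwards [hCIA, h1, hp] with ω hA hB hC
    rw [← hA, hB, Pi.mul_apply, hC]
  filter_upwards [key, hoverlap] with ω hk hpos
  exact mul_right_cancel₀ (ne_of_gt hpos) hk
end

section
/- The inverse-probability-weighting representation under single-period unconfoundedness: under CIA Y^d ⫫ D | X₀, overlap p(X₀) = P(D=d|X₀) > 0 a.s., consistency, and integrability of Y·1{D=d}/p(X₀), one has E[ Y·1{D=d} / p(X₀) ] = E[Y^d]. -/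
open MeasureTheory

/-- The IPW representation under single-period unconfoundedness:
`E[Y·1{D=d}/p(X₀)] = E[Y^d]`. -/
theorem ipw_identification {Ω 𝒟 : Type*} (m0 : MeasurableSpace Ω) {mΩ : MeasurableSpace Ω}
    [MeasurableSpace 𝒟] [MeasurableSingletonClass 𝒟] [DecidableEq 𝒟]
    (μ : Measure Ω) [IsProbabilityMeasure μ]
    (hm0 : m0 ≤ mΩ)
    (D : Ω → 𝒟) (hD : Measurable D) (d : 𝒟)
    (Y Yd p : Ω → ℝ)
    (ind : Ω → ℝ) (hind : ind = fun ω => if D ω = d then (1 : ℝ) else 0)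
    (hYdInt : Integrable Yd μ)
    -- `p` is a version of `P(D=d | X₀) = E[1{D=d} | X₀]`
    (hp : p =ᵐ[μ] μ[ind | m0])
    -- overlap
    (hov : ∀ᵐ ω ∂μ, 0 < p ω)
    -- CIA: `Y^d ⫫ D | X₀`
    (hCIA : (μ[fun ω => Yd ω * ind ω | m0]) =ᵐ[μ] fun ω => (μ[Yd | m0]) ω * p ω)
    -- consistency
    (hcons : ∀ ω, Y ω * ind ω = Yd ω * ind ω)
    -- integrability of the weighted outcome
    (hIPWInt : Integrable (fun ω => Y ω * ind ω / p ω) μ) :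
    ∫ ω, Y ω * ind ω / p ω ∂μ = ∫ ω, Yd ω ∂μ := by
  set p' : Ω → ℝ := μ[ind | m0] with hp'def
  have hp'meas : StronglyMeasurable[m0] p' := stronglyMeasurable_condExp
  have hinvmeas : StronglyMeasurable[m0] (fun ω => (p' ω)⁻¹) := (hp'meas.measurable.inv).stronglyMeasurable
  -- the target function, rewritten
  have hgdef : (fun ω => Y ω * ind ω / p ω)
      = fun ω => Yd ω * ind ω / p ω := by
    funext ω; rw [hcons ω]
  have hindmeas : Measurable[mΩ] ind := by
    rw [hind]
    exact Measurable.ite (hD (measurableSet_singleton d)) measurable_const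
      measurable_const
  have hYdind : Integrable (fun ω => Yd ω * ind ω) μ := by
    have hindae : AEStronglyMeasurable[mΩ] ind μ := hindmeas.aestronglyMeasurable
    refine hYdInt.mono (hYdInt.1.mul hindae) ?_
    filter_upwards with ω
    rw [hind]
    simp only [norm_mul, Real.norm_eq_abs]
    by_cases h : D ω = d <;> simp [h]
  -- h := (p')⁻¹ * (Yd * ind)
  have hgh : (fun ω => Y ω * ind ω / p ω)
      =ᵐ[μ] fun ω => (p' ω)⁻¹ * (Yd ω * ind ω) := by
    filter_upwards [hp] with ω hω
    rw [hcons ω, div_eq_inv_mul, hω]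
  have hhInt : Integrable (fun ω => (p' ω)⁻¹ * (Yd ω * ind ω)) μ :=
    hIPWInt.congr hgh
  have hpull : μ[(fun ω => (p' ω)⁻¹) * (fun ω => Yd ω * ind ω) | m0]
      =ᵐ[μ] (fun ω => (p' ω)⁻¹) * μ[(fun ω => Yd ω * ind ω) | m0] :=
    condExp_mul_of_stronglyMeasurable_left hinvmeas hhInt hYdind
  have hp'pos : ∀ᵐ ω ∂μ, 0 < p' ω := by
    filter_upwards [hov, hp] with ω h1 h2
    rw [← h2]; exact h1
  have hfinal : μ[(fun ω => (p' ω)⁻¹ * (Yd ω * ind ω)) | m0]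
      =ᵐ[μ] μ[Yd | m0] := by
    refine hpull.trans ?_
    filter_upwards [hCIA, hp, hp'pos] with ω h1 h2 h3
    simp only [Pi.mul_apply]
    have hne : p' ω ≠ 0 := h3.ne'
    rw [h1, h2]
    field_simp
  calc ∫ ω, Y ω * ind ω / p ω ∂μ
      = ∫ ω, (p' ω)⁻¹ * (Yd ω * ind ω) ∂μ := integral_congr_ae hgh
    _ = ∫ ω, (μ[(fun ω => (p' ω)⁻¹ * (Yd ω * ind ω)) | m0]) ω ∂μ :=
        (integral_condExp hm0).symm
    _ = ∫ ω, (μ[Yd | m0]) ω ∂μ := integral_congr_ae hfinal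
    _ = ∫ ω, Yd ω ∂μ := integral_condExp hm0
end
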